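/- Let L ≥ 1 be an integer and λ, μ, a > 0. If W ~ Gamma(shape L, rate λ) and Y ~ Exp(μ) are independent, then E[ e^{−a·Y/W} ] = L · e^{aλ/μ} · E_{L+1}(aλ/μ), where E_n(z) = ∫₁^∞ e^{−z s} s^{−n} ds. Equivalently, ∫₀^∞ ∫₀^∞ e^{−ay/w} · (λ^L w^{L−1} e^{−λw}/(L−1)!) · (μ e^{−μy}) dy dw = L e^{aλ/μ} E_{L+1}(aλ/μ). -/

import Mathlib

open MeasureTheory ProbabilityTheory Real

/-- The generalized exponential integral `E_n(z) = ∫₁^∞ e^{−z s} s^{−n} ds`. -/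
noncomputable def genExpInt (n : ℕ) (z : ℝ) : ℝ :=
  ∫ s in Set.Ioi (1 : ℝ), Real.exp (-(z * s)) / s ^ n

/-!
Substituting `y = (λ w / μ) t` in the inner integral turns `e^{−a y / w}` into `e^{−z t}` with
`z = a λ / μ`, and merges the two remaining exponentials into `e^{−λ (1 + t) w}`. After Fubini
the `w`-integral is a Gamma integral, `∫₀^∞ w^L e^{−λ (1 + t) w} dw = L! / (λ (1 + t))^{L+1}`,
which leaves `L ∫₀^∞ e^{−z t} (1 + t)^{−(L+1)} dt = L e^z E_{L+1}(z)`.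
-/

open Set Nat

lemma integral_pow_mul_exp_neg_mul_Ioi (n : ℕ) {c : ℝ} (hc : 0 < c) :
    ∫ x in Ioi 0, x ^ n * exp (-(c * x)) = n ! / c ^ (n + 1) := by
  have h := integral_rpow_mul_exp_neg_mul_Ioi (a := n + 1) (by positivity) hc
  rw [add_sub_cancel_right] at h
  rw [← Gamma_nat_eq_factorial]
  simp only [rpow_natCast] at h
  norm_cast at h ⊢
  rw [h, one_div, inv_pow, inv_mul_eq_div]

lemma integrableOn_pow_mul_exp_neg_mul_Ioi (n : ℕ) {c : ℝ} (hc : 0 < c) :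
    IntegrableOn (fun x : ℝ ↦ x ^ n * exp (-(c * x))) (Ioi 0) := by
  simpa [rpow_natCast] using integrableOn_rpow_mul_exp_neg_mul_rpow (s := n) (p := 1)
    (by linarith [n.cast_nonneg (α := ℝ)]) one_pos hc

lemma integral_Ioi_comp_add_left {E : Type*} [NormedAddCommGroup E] [NormedSpace ℝ E]
    (g : ℝ → E) (a d : ℝ) : ∫ x in Ioi a, g (d + x) = ∫ x in Ioi (d + a), g x := by
  rw [← integral_indicator measurableSet_Ioi, ← integral_indicator measurableSet_Ioi,
    ← integral_add_left_eq_self ((Ioi (d + a)).indicator g) d]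
  congr 1
  ext x
  simp [indicator_apply]

lemma integral_Ioi_zero_eq_mul_integral_comp_mul_left {E : Type*} [NormedAddCommGroup E]
    [NormedSpace ℝ E] (g : ℝ → E) {b : ℝ} (hb : 0 < b) :
    ∫ y in Ioi 0, g y = b • ∫ t in Ioi 0, g (b * t) := by
  rw [integral_comp_mul_left_Ioi' g 0 hb, mul_zero]

lemma exp_mul_genExpInt (n : ℕ) (z : ℝ) :
    exp z * genExpInt n z = ∫ t in Ioi 0, exp (-(z * t)) / (1 + t) ^ n := by
  rw [genExpInt, ← integral_const_mul, ← add_zero (1 : ℝ), ← integral_Ioi_comp_add_left]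
  refine setIntegral_congr_fun measurableSet_Ioi fun t _ ↦ ?_
  rw [mul_div_assoc', ← exp_add]
  ring_nf

lemma integral_Ioi_integral_Ioi_exp_mul_pow_mul_exp (n : ℕ) {c z : ℝ} (hc : 0 < c)
    (hz : 0 < z) :
    ∫ w in Ioi 0, ∫ t in Ioi 0, exp (-(z * t)) * (w ^ n * exp (-(c * (1 + t) * w))) =
      n ! / c ^ (n + 1) * ∫ t in Ioi 0, exp (-(z * t)) / (1 + t) ^ (n + 1) := by
  have hint : Integrable
      (Function.uncurry fun w t ↦ exp (-(z * t)) * (w ^ n * exp (-(c * (1 + t) * w))))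
      ((volume.restrict (Ioi 0)).prod (volume.restrict (Ioi 0))) := by
    refine ((integrableOn_pow_mul_exp_neg_mul_Ioi n hc).mul_prod
      (exp_neg_integrableOn_Ioi 0 hz)).mono' (by fun_prop) ?_
    rw [Measure.prod_restrict, ae_restrict_iff' (measurableSet_Ioi.prod measurableSet_Ioi)]
    refine ae_of_all _ fun ⟨w, t⟩ ⟨(hw : 0 < w), (ht : 0 < t)⟩ ↦ ?_
    rw [Function.uncurry_apply_pair, norm_of_nonneg (by positivity), neg_mul z, mul_comm]
    gcongr
    nlinarith [mul_pos hc (mul_pos ht hw)]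
  rw [integral_integral_swap hint, ← integral_const_mul]
  refine setIntegral_congr_fun measurableSet_Ioi fun t (ht : 0 < t) ↦ ?_
  rw [integral_const_mul, integral_pow_mul_exp_neg_mul_Ioi n (by positivity), mul_pow]
  field_simp

theorem integral_Ioi_integral_Ioi_exp_neg_mul_div_gammaPDF_expPDF {L : ℕ} (hL : 1 ≤ L)
    {lam mu a : ℝ} (hlam : 0 < lam) (hmu : 0 < mu) (ha : 0 < a) :
    (∫ w in Ioi (0 : ℝ), ∫ y in Ioi (0 : ℝ),
        exp (-(a * y) / w) * (lam ^ L * w ^ (L - 1) * exp (-(lam * w)) / (L - 1)!) *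
          (mu * exp (-(mu * y)))) =
      L * exp (a * lam / mu) * genExpInt (L + 1) (a * lam / mu) := by
  obtain ⟨n, rfl⟩ := exists_add_of_le hL
  set z := a * lam / mu with hz
  have inner : ∀ w ∈ Ioi (0 : ℝ), (∫ y in Ioi (0 : ℝ),
      exp (-(a * y) / w) * (lam ^ (1 + n) * w ^ (1 + n - 1) * exp (-(lam * w)) / (1 + n - 1)!) *
        (mu * exp (-(mu * y)))) =
      lam ^ (n + 2) / n ! *
        ∫ t in Ioi 0, exp (-(z * t)) * (w ^ (n + 1) * exp (-(lam * (1 + t) * w))) := by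
    intro w (hw : 0 < w)
    have hb : 0 < lam * w / mu := by positivity
    rw [integral_Ioi_zero_eq_mul_integral_comp_mul_left _ hb, smul_eq_mul,
      ← integral_const_mul, ← integral_const_mul]
    refine setIntegral_congr_fun measurableSet_Ioi fun t _ ↦ ?_
    have hexp_a : -(a * (lam * w / mu * t)) / w = -(z * t) := by
      rw [hz]; field_simp
    have hexp_mu : exp (-(lam * (1 + t) * w)) =
        exp (-(lam * w)) * exp (-(mu * (lam * w / mu * t))) := by
      rw [← exp_add]; congr 1; field_simp; ring
    rw [add_tsub_cancel_left, hexp_a, hexp_mu]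
    field_simp
    ring
  calc _ = lam ^ (n + 2) / n ! * ∫ w in Ioi 0, ∫ t in Ioi 0,
          exp (-(z * t)) * (w ^ (n + 1) * exp (-(lam * (1 + t) * w))) := by
        rw [setIntegral_congr_fun measurableSet_Ioi inner, integral_const_mul]
    _ = lam ^ (n + 2) / n ! * ((n + 1)! / lam ^ (n + 2) *
          ∫ t in Ioi 0, exp (-(z * t)) / (1 + t) ^ (n + 2)) := by
        rw [integral_Ioi_integral_Ioi_exp_mul_pow_mul_exp (n + 1) hlam (by positivity)]
    _ = _ := by
        rw [add_comm 1 n, ← exp_mul_genExpInt, factorial_succ]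
        push_cast
        field_simp

lemma ProbabilityTheory.IndepFun.integral_comp_eq_integral_integral {Ω α β E : Type*}
    [MeasurableSpace Ω] [MeasurableSpace α] [MeasurableSpace β] [NormedAddCommGroup E]
    [NormedSpace ℝ E] {P : Measure Ω} [IsFiniteMeasure P] {X : Ω → α} {Y : Ω → β}
    (hXY : IndepFun X Y P) (hX : AEMeasurable X P) (hY : AEMeasurable Y P) {F : α × β → E}
    (hF : Integrable F ((P.map X).prod (P.map Y))) :
    ∫ ω, F (X ω, Y ω) ∂P = ∫ x, ∫ y, F (x, y) ∂P.map Y ∂P.map X := by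
  have hmap := (indepFun_iff_map_prod_eq_prod_map_map hX hY).mp hXY
  rw [← integral_prod F hF, ← hmap, integral_map (hX.prodMk hY) (hmap ▸ hF.aestronglyMeasurable)]

lemma ae_nonneg_gammaMeasure (a r : ℝ) : ∀ᵐ x ∂gammaMeasure a r, 0 ≤ x := by
  rw [gammaMeasure,
    ae_withDensity_iff (f := gammaPDF a r) (measurable_gammaPDFReal a r).ennreal_ofReal]
  refine ae_of_all _ fun x hx ↦ ?_
  by_contra! h
  exact hx (gammaPDF_of_neg h)

lemma integral_gammaMeasure {a r : ℝ} (ha : 0 < a) (hr : 0 < r) (f : ℝ → ℝ) :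
    ∫ x, f x ∂gammaMeasure a r = ∫ x in Ioi 0, gammaPDFReal a r x * f x := by
  have hpdf : gammaPDF a r = fun x ↦ ((gammaPDFReal a r x).toNNReal : ENNReal) := rfl
  rw [gammaMeasure, hpdf, integral_withDensity_eq_integral_smul
    (measurable_gammaPDFReal a r).real_toNNReal, ← integral_Ici_eq_integral_Ioi,
    ← setIntegral_eq_integral_of_forall_compl_eq_zero]
  · refine setIntegral_congr_fun measurableSet_Ici fun x _ ↦ ?_
    rw [NNReal.smul_def, Real.coe_toNNReal _ (gammaPDFReal_nonneg ha hr x), smul_eq_mul]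
  · intro x (hx : ¬ 0 ≤ x)
    simp [gammaPDFReal, hx]

lemma gammaPDFReal_natCast {L : ℕ} (hL : 1 ≤ L) (r : ℝ) {x : ℝ} (hx : 0 ≤ x) :
    gammaPDFReal L r x = r ^ L * x ^ (L - 1) * exp (-(r * x)) / (L - 1)! := by
  obtain ⟨n, rfl⟩ := exists_add_of_le hL
  rw [gammaPDFReal, if_pos hx, add_comm 1 n, add_tsub_cancel_right, Nat.cast_succ,
    Gamma_nat_eq_factorial, add_sub_cancel_right]
  norm_cast
  ring

lemma gammaPDFReal_one (r : ℝ) {x : ℝ} (hx : 0 ≤ x) :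
    gammaPDFReal 1 r x = r * exp (-(r * x)) := by
  simpa using gammaPDFReal_natCast le_rfl r hx

lemma integrable_exp_neg_mul_snd_div_fst {μ ν : Measure ℝ} [IsFiniteMeasure μ]
    [IsFiniteMeasure ν] (hμ : ∀ᵐ x ∂μ, 0 ≤ x) (hν : ∀ᵐ y ∂ν, 0 ≤ y) {a : ℝ} (ha : 0 ≤ a) :
    Integrable (fun p : ℝ × ℝ ↦ exp (-(a * p.2) / p.1)) (μ.prod ν) := by
  refine (integrable_const (1 : ℝ)).mono' (Measurable.aestronglyMeasurable (by fun_prop)) ?_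
  filter_upwards [Measure.quasiMeasurePreserving_fst.ae hμ,
    Measure.quasiMeasurePreserving_snd.ae hν] with p hp₁ hp₂
  rw [norm_of_nonneg (exp_nonneg _), exp_le_one_iff]
  exact div_nonpos_of_nonpos_of_nonneg (by nlinarith) hp₁

theorem integral_exp_neg_mul_div_eq_integral_Ioi_gammaPDF_expPDF {Ω : Type*}
    [MeasurableSpace Ω] {P : Measure Ω} [IsProbabilityMeasure P] {L : ℕ} (hL : 1 ≤ L)
    {lam mu a : ℝ} (hlam : 0 < lam) (hmu : 0 < mu) (ha : 0 < a) {W Y : Ω → ℝ}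
    (hW : Measurable W) (hY : Measurable Y) (hWd : P.map W = gammaMeasure L lam)
    (hYd : P.map Y = expMeasure mu) (hindep : IndepFun W Y P) :
    ∫ ω, exp (-(a * Y ω) / W ω) ∂P =
      ∫ w in Ioi (0 : ℝ), ∫ y in Ioi (0 : ℝ),
        exp (-(a * y) / w) * (lam ^ L * w ^ (L - 1) * exp (-(lam * w)) / (L - 1)!) *
          (mu * exp (-(mu * y))) := by
  have hL₀ : (0 : ℝ) < L := by exact_mod_cast hL
  have : IsProbabilityMeasure (gammaMeasure L lam) := isProbabilityMeasure_gammaMeasure hL₀ hlam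
  have : IsProbabilityMeasure (gammaMeasure 1 mu) := isProbabilityMeasure_gammaMeasure one_pos hmu
  rw [expMeasure] at hYd
  have hF : Integrable (fun p : ℝ × ℝ ↦ exp (-(a * p.2) / p.1))
      ((gammaMeasure L lam).prod (gammaMeasure 1 mu)) :=
    integrable_exp_neg_mul_snd_div_fst (ae_nonneg_gammaMeasure L lam)
      (ae_nonneg_gammaMeasure 1 mu) ha.le
  rw [← hWd, ← hYd] at hF
  refine (hindep.integral_comp_eq_integral_integral hW.aemeasurable hY.aemeasurable hF).trans ?_
  rw [hWd, hYd, integral_gammaMeasure hL₀ hlam]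
  refine setIntegral_congr_fun measurableSet_Ioi fun w (hw : 0 < w) ↦ ?_
  rw [integral_gammaMeasure one_pos hmu, ← integral_const_mul]
  refine setIntegral_congr_fun measurableSet_Ioi fun y (hy : 0 < y) ↦ ?_
  rw [gammaPDFReal_natCast hL lam hw.le, gammaPDFReal_one mu hy.le]
  ring

/-- For independent `W ~ Gamma(L, lam)` and `Y ~ Exp(mu)`,
`E[e^{−a·Y/W}] = L·e^{a·lam/mu}·E_{L+1}(a·lam/mu)`; equivalently, the corresponding
double integral against the two densities has the same value. -/
theorem gamma_exp_laplace_average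
    {Ω : Type*} [MeasurableSpace Ω] (Pr : Measure Ω) [IsProbabilityMeasure Pr]
    (L : ℕ) (hL : 1 ≤ L) (lam mu a : ℝ) (hlam : 0 < lam) (hmu : 0 < mu) (ha : 0 < a)
    (W Y : Ω → ℝ) (hW : Measurable W) (hY : Measurable Y)
    (hWd : Pr.map W = gammaMeasure L lam)
    (hYd : Pr.map Y = expMeasure mu)
    (hindep : IndepFun W Y Pr) :
    (∫ ω, Real.exp (-(a * Y ω) / W ω) ∂Pr =
      L * Real.exp (a * lam / mu) * genExpInt (L + 1) (a * lam / mu)) ∧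
    (∫ w in Set.Ioi (0 : ℝ), ∫ y in Set.Ioi (0 : ℝ),
        Real.exp (-(a * y) / w) *
          (lam ^ L * w ^ (L - 1) * Real.exp (-(lam * w)) / (Nat.factorial (L - 1))) *
          (mu * Real.exp (-(mu * y))) =
      L * Real.exp (a * lam / mu) * genExpInt (L + 1) (a * lam / mu)) := by
  have hdouble := integral_Ioi_integral_Ioi_exp_neg_mul_div_gammaPDF_expPDF hL hlam hmu ha
  exact ⟨(integral_exp_neg_mul_div_eq_integral_Ioi_gammaPDF_expPDF hL hlam hmu ha hW hY hWd hYd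
    hindep).trans hdouble, hdouble⟩
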